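/- Let τ_{m,n} be nowhere-vanishing functions of t and set w_{m,n} = τ_{m+1,n} / τ_{m,n+1}. Fix i ≠ j in I ∪ J and suppose that for all (m,n) ∈ ℤ² the w-equation holds: T_i T_j(w_{m,n}) = (T_i(w_{m,n+1}) T_j(w_{m,n+1}) / w_{m+1,n+1}) · (t_i T_j(w_{m+1,n}) − t_j T_i(w_{m+1,n})) / (t_i T_j(w_{m,n+1}) − t_j T_i(w_{m,n+1})), the denominators being nonzero. Then the quantity Q_{m,n} := (t_i T_i(τ_{m+1,n+1}) T_j(τ_{m+2,n}) − t_j T_j(τ_{m+1,n+1}) T_i(τ_{m+2,n})) / (T_i T_j(τ_{m+1,n}) τ_{m+2,n+1}) satisfies Q_{m,n} = Q_{m-1,n+1} for all (m,n) ∈ ℤ². -/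

import Mathlib

/-!
Written in terms of `τ`, the `w`-equation at `(m, n)` becomes, once all denominators are
cleared, the cross-multiplied form of `Q_{m,n} = Q_{m-1,n+1}`: both sides are quotients of
the same eight nonvanishing `τ`-values, and the two `t_i, t_j`-combinations appearing in the
`w`-equation are exactly the numerators of `Q_{m,n}` and `Q_{m-1,n+1}`.
-/

/-- The `q`-shift operator on the point `t`: `t_i ↦ q t_i` if `i > 0` (i.e. `i ∈ I`),
`t_i ↦ q⁻¹ t_i` if `i < 0` (i.e. `i ∈ J`), other coordinates unchanged. -/
noncomputable def Tshift (q : ℂ) (i : ℤ) (t : ℤ → ℂ) : ℤ → ℂ :=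
  Function.update t i ((if 0 < i then q else q⁻¹) * t i)

/-- `w_{m,n} = τ_{m+1,n} / τ_{m,n+1}`. -/
noncomputable def wOf (τ : ℤ → ℤ → (ℤ → ℂ) → ℂ) (m n : ℤ) (t : ℤ → ℂ) : ℂ :=
  τ (m + 1) n t / τ m (n + 1) t

/-- `Q_{m,n} = (t_i T_i(τ_{m+1,n+1}) T_j(τ_{m+2,n}) − t_j T_j(τ_{m+1,n+1}) T_i(τ_{m+2,n}))
/ (T_i T_j(τ_{m+1,n}) τ_{m+2,n+1})`. -/
noncomputable def Qexpr (q : ℂ) (i j : ℤ) (τ : ℤ → ℤ → (ℤ → ℂ) → ℂ) (m n : ℤ)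
    (t : ℤ → ℂ) : ℂ :=
  (t i * τ (m + 1) (n + 1) (Tshift q i t) * τ (m + 2) n (Tshift q j t)
      - t j * τ (m + 1) (n + 1) (Tshift q j t) * τ (m + 2) n (Tshift q i t))
    / (τ (m + 1) n (Tshift q i (Tshift q j t)) * τ (m + 2) (n + 1) t)

theorem Tshift_ne_zero {q : ℂ} (hq : q ≠ 0) (i : ℤ) {t : ℤ → ℂ} (ht : ∀ l, t l ≠ 0) (l : ℤ) :
    Tshift q i t l ≠ 0 := by
  rcases eq_or_ne l i with rfl | h
  · rw [Tshift, Function.update_self]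
    exact mul_ne_zero (by split_ifs <;> simp [hq]) (ht l)
  · rw [Tshift, Function.update_of_ne h]
    exact ht l

theorem div_eq_div_of_w_equation {K : Type*} [Field K] {a₁ a₂ b₁ b₂ c₁ c₂ d₁ d₂ e f x y : K}
    (ha₁ : a₁ ≠ 0) (ha₂ : a₂ ≠ 0) (hb₁ : b₁ ≠ 0) (hb₂ : b₂ ≠ 0) (hc₁ : c₁ ≠ 0) (hc₂ : c₂ ≠ 0)
    (hd₁ : d₁ ≠ 0) (hd₂ : d₂ ≠ 0) (hden : x * (c₁ / c₂) - y * (b₁ / b₂) ≠ 0)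
    (h : a₁ / a₂ = b₁ / b₂ * (c₁ / c₂) / (d₁ / d₂) * (x * (e / c₁) - y * (f / b₁))
      / (x * (c₁ / c₂) - y * (b₁ / b₂))) :
    (x * b₁ * e - y * c₁ * f) / (a₁ * d₁) = (x * b₂ * c₁ - y * c₂ * b₁) / (a₂ * d₂) := by
  rw [div_eq_div_iff (mul_ne_zero ha₁ hd₁) (mul_ne_zero ha₂ hd₂)]
  rw [eq_div_iff hden] at h
  field_simp at h
  linear_combination -h

theorem w_equation_decomposition_general
    (q : ℂ) (hq : q ≠ 0)
    (τ : ℤ → ℤ → (ℤ → ℂ) → ℂ)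
    (hτ : ∀ m n : ℤ, ∀ t : ℤ → ℂ, (∀ l, t l ≠ 0) → τ m n t ≠ 0)
    (i j : ℤ)
    (hden : ∀ m n : ℤ, ∀ t : ℤ → ℂ, (∀ l, t l ≠ 0) →
      t i * wOf τ m (n + 1) (Tshift q j t) - t j * wOf τ m (n + 1) (Tshift q i t) ≠ 0)
    (hweq : ∀ m n : ℤ, ∀ t : ℤ → ℂ, (∀ l, t l ≠ 0) →
      wOf τ m n (Tshift q i (Tshift q j t))
        = wOf τ m (n + 1) (Tshift q i t) * wOf τ m (n + 1) (Tshift q j t)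
            / wOf τ (m + 1) (n + 1) t
          * (t i * wOf τ (m + 1) n (Tshift q j t) - t j * wOf τ (m + 1) n (Tshift q i t))
          / (t i * wOf τ m (n + 1) (Tshift q j t) - t j * wOf τ m (n + 1) (Tshift q i t))) :
    ∀ m n : ℤ, ∀ t : ℤ → ℂ, (∀ l, t l ≠ 0) →
      Qexpr q i j τ m n t = Qexpr q i j τ (m - 1) (n + 1) t := by
  intro m n t ht
  have hτ_i : ∀ m n, τ m n (Tshift q i t) ≠ 0 := fun m n => hτ m n _ (Tshift_ne_zero hq i ht)
  have hτ_j : ∀ m n, τ m n (Tshift q j t) ≠ 0 := fun m n => hτ m n _ (Tshift_ne_zero hq j ht)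
  have hτ_ij : ∀ m n, τ m n (Tshift q i (Tshift q j t)) ≠ 0 :=
    fun m n => hτ m n _ (Tshift_ne_zero hq i (Tshift_ne_zero hq j ht))
  have key := div_eq_div_of_w_equation (hτ_ij _ _) (hτ_ij _ _) (hτ_i _ _) (hτ_i _ _)
    (hτ_j _ _) (hτ_j _ _) (hτ _ _ _ ht) (hτ _ _ _ ht) (hden m n t ht) (hweq m n t ht)
  simpa only [Qexpr, show m - 1 + 1 = m by ring, show m - 1 + 2 = m + 1 by ring,
    show m + 2 = m + 1 + 1 by ring] using key

/-- for nowhere-vanishing `τ_{m,n}`, `w_{m,n} = τ_{m+1,n}/τ_{m,n+1}`, and a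
fixed pair `i ≠ j` in `I ∪ J` such that the `w`-equation holds for all `(m,n)` (the
denominators being nonzero), the quantity `Q_{m,n}` satisfies `Q_{m,n} = Q_{m-1,n+1}`. -/
theorem w_equation_decomposition
    (q : ℂ) (hq : q ≠ 0) (I J : Finset ℤ) (hI : ∀ i ∈ I, 0 < i) (hJ : ∀ j ∈ J, j < 0)
    (τ : ℤ → ℤ → (ℤ → ℂ) → ℂ)
    (hτ : ∀ m n : ℤ, ∀ t : ℤ → ℂ, (∀ l, t l ≠ 0) → τ m n t ≠ 0)
    (i j : ℤ) (hi : i ∈ I ∪ J) (hj : j ∈ I ∪ J) (hij : i ≠ j)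
    (hden : ∀ m n : ℤ, ∀ t : ℤ → ℂ, (∀ l, t l ≠ 0) →
      t i * wOf τ m (n + 1) (Tshift q j t) - t j * wOf τ m (n + 1) (Tshift q i t) ≠ 0)
    (hweq : ∀ m n : ℤ, ∀ t : ℤ → ℂ, (∀ l, t l ≠ 0) →
      wOf τ m n (Tshift q i (Tshift q j t))
        = wOf τ m (n + 1) (Tshift q i t) * wOf τ m (n + 1) (Tshift q j t)
            / wOf τ (m + 1) (n + 1) t
          * (t i * wOf τ (m + 1) n (Tshift q j t) - t j * wOf τ (m + 1) n (Tshift q i t))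
          / (t i * wOf τ m (n + 1) (Tshift q j t) - t j * wOf τ m (n + 1) (Tshift q i t))) :
    ∀ m n : ℤ, ∀ t : ℤ → ℂ, (∀ l, t l ≠ 0) →
      Qexpr q i j τ m n t = Qexpr q i j τ (m - 1) (n + 1) t :=
  w_equation_decomposition_general q hq τ hτ i j hden hweq
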